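/- arXiv:1509.04381 — 3 statements merged into one kernel-verified Lean document; each statement's English description precedes it below -/
import Mathlib

section
/- Lower estimate for the error of optimal recovery of an odd operator matrix: Suppose for all i = 1,…,l and j = 1,…,m the map A_{ij} : X_j → Y_i is odd (A_{ij}(−x) = −A_{ij}(x)), each class W_j ⊆ X_j is centrally symmetric, each U_j ⊆ Z_j is nonempty, and the set W̄(Ū) := { x̄ ∈ W̄ : (Ī x̄ + Ū) ∩ (Ī(−x̄) + Ū) ≠ ∅ } is nonempty. Then the error of optimal recovery satisfies E_ψ(Ā; W̄; Ī; Ū) ≥ sup_{x̄ ∈ W̄(Ū)} ‖Ā x̄‖_ψ. -/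
/-!
If a datum `z` is compatible with both `x̄` and `-x̄`, a method `Φ` answers `Φ z` for both, while
`Ā x̄` and `Ā (-x̄) = -Ā x̄` lie `2 ‖Ā x̄‖_ψ` apart; by the triangle inequality one of the two errors
is at least `‖Ā x̄‖_ψ`.
-/

namespace Seminorm

theorem le_max_sub_neg_sub {E : Type*} [AddCommGroup E] [Module ℝ E] (p : Seminorm ℝ E)
    (y c : E) : p y ≤ max (p (y - c)) (p (-y - c)) := by
  have h : 2 * p y ≤ p (y - c) + p (-y - c) :=
    calc 2 * p y = p ((2 : ℝ) • y) := by rw [map_smul_eq_mul, Real.norm_two]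
      _ = p ((y - c) - (-y - c)) := by rw [two_smul]; abel_nf
      _ ≤ p (y - c) + p (-y - c) := map_sub_le_add p _ _
  linarith [le_max_left (p (y - c)) (p (-y - c)), le_max_right (p (y - c)) (p (-y - c))]

/-- The norm `‖·‖_ψ` on `Ȳ`. -/
def ofMonotonePiNorm {ι : Type*} {Y : ι → Type*} [∀ i, SeminormedAddCommGroup (Y i)]
    [∀ i, NormedSpace ℝ (Y i)] (ψ : (ι → ℝ) → ℝ)
    (hψ_add : ∀ v w, ψ (v + w) ≤ ψ v + ψ w)
    (hψ_smul : ∀ (c : ℝ) (v : ι → ℝ), ψ (c • v) = |c| * ψ v)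
    (hψ_mono : ∀ v w : ι → ℝ, (∀ i, 0 ≤ v i) → (∀ i, v i ≤ w i) → ψ v ≤ ψ w) :
    Seminorm ℝ (∀ i, Y i) :=
  Seminorm.of (fun y => ψ fun i => ‖y i‖)
    (fun y y' => (hψ_mono _ _ (fun _ => norm_nonneg _) fun i => norm_add_le (y i) (y' i)).trans
      (hψ_add _ _))
    (fun c y => by
      simp only [Pi.smul_apply, norm_smul, Real.norm_eq_abs]
      exact (hψ_smul |c| _).trans (by rw [abs_abs]))

end Seminorm

theorem sum_apply_neg_of_odd {ι κ : Type*} [Fintype κ] {X : κ → Type*} [∀ j, Neg (X j)]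
    {Y : ι → Type*} [∀ i, AddCommGroup (Y i)] (A : ∀ i j, X j → Y i)
    (hA_odd : ∀ i j x, A i j (-x) = -A i j x) (x : ∀ j, X j) :
    (fun i => ∑ j, A i j ((-x) j)) = -fun i => ∑ j, A i j (x j) := by
  funext i
  simp only [Pi.neg_apply, hA_odd, Finset.sum_neg_distrib]

theorem ofReal_le_worstCaseError_of_mem_neg {α β E : Type*} [Neg α] [AddCommGroup E]
    [Module ℝ E] (p : Seminorm ℝ E) {T : α → E} (hT : ∀ x, T (-x) = -T x) {W : Set α}
    (D : α → Set β) (Φ : β → E) {x : α} (hx : x ∈ W) (hnx : -x ∈ W) {z : β} (hz : z ∈ D x)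
    (hnz : z ∈ D (-x)) :
    ENNReal.ofReal (p (T x)) ≤ ⨆ x ∈ W, ⨆ z ∈ D x, ENNReal.ofReal (p (T x - Φ z)) := by
  have hle : ∀ x' ∈ W, ∀ z' ∈ D x',
      ENNReal.ofReal (p (T x' - Φ z')) ≤ ⨆ x ∈ W, ⨆ z ∈ D x, ENNReal.ofReal (p (T x - Φ z)) :=
    fun x' hx' z' hz' => le_iSup₂_of_le x' hx' <|
      le_iSup₂_of_le (f := fun z _ => ENNReal.ofReal (p (T x' - Φ z))) z' hz' le_rfl
  calc ENNReal.ofReal (p (T x))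
      ≤ ENNReal.ofReal (max (p (T x - Φ z)) (p (T (-x) - Φ z))) :=
        ENNReal.ofReal_le_ofReal (hT x ▸ p.le_max_sub_neg_sub _ _)
    _ = max (ENNReal.ofReal (p (T x - Φ z))) (ENNReal.ofReal (p (T (-x) - Φ z))) :=
        ENNReal.ofReal_max _ _
    _ ≤ _ := max_le (hle x hx z hz) (hle (-x) hnx z hnz)

theorem optimal_recovery_lower_estimate_general_general
    {m l : ℕ}
    (X : Fin m → Type*) [∀ j, AddCommGroup (X j)] [∀ j, Module ℝ (X j)]
    (Y : Fin l → Type*) [∀ i, NormedAddCommGroup (Y i)] [∀ i, NormedSpace ℝ (Y i)]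
    (Z : Fin m → Type*) [∀ j, AddCommGroup (Z j)] [∀ j, Module ℝ (Z j)]
    (ψ : (Fin l → ℝ) → ℝ)
    (hψ_add : ∀ v w, ψ (v + w) ≤ ψ v + ψ w)
    (hψ_smul : ∀ (c : ℝ) (v : Fin l → ℝ), ψ (c • v) = |c| * ψ v)
    (hψ_mono : ∀ v w : Fin l → ℝ, (∀ i, 0 ≤ v i) → (∀ i, v i ≤ w i) → ψ v ≤ ψ w)
    (A : ∀ (i : Fin l) (j : Fin m), X j → Y i)
    (hA_odd : ∀ i j (x : X j), A i j (-x) = -(A i j x))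
    (I : ∀ j : Fin m, X j → Z j)
    (W : ∀ j : Fin m, Set (X j))
    (hW_symm : ∀ j, ∀ x ∈ W j, -x ∈ W j)
    (U : ∀ j : Fin m, Set (Z j)) :
    -- the operator matrix, the ψ-norm, the class, the available data, and the set W̄(Ū)
    let Abar : (∀ j, X j) → ∀ i, Y i := fun x i => ∑ j, A i j (x j)
    let normψ : (∀ i, Y i) → ℝ := fun y => ψ fun i => ‖y i‖
    let Wbar : Set (∀ j, X j) := {x | ∀ j, x j ∈ W j}
    let Data : (∀ j, X j) → Set (∀ j, Z j) :=
      fun x => {z | ∀ j, ∃ u ∈ U j, z j = I j (x j) + u}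
    let WU : Set (∀ j, X j) := {x | x ∈ Wbar ∧ (Data x ∩ Data (-x)).Nonempty}
    WU.Nonempty →
      (⨆ x ∈ WU, ENNReal.ofReal (normψ (Abar x))) ≤
        ⨅ Φ : (∀ j, Z j) → ∀ i, Y i,
          ⨆ x ∈ Wbar, ⨆ z ∈ Data x, ENNReal.ofReal (normψ (Abar x - Φ z)) := by
  intro Abar normψ Wbar Data WU _
  set p := Seminorm.ofMonotonePiNorm (Y := Y) ψ hψ_add hψ_smul hψ_mono
  have hp : ∀ y, normψ y = p y := fun _ => rfl
  simp only [hp]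
  refine le_iInf fun Φ => iSup₂_le fun x ⟨hx, z, hz, hnz⟩ => ?_
  exact ofReal_le_worstCaseError_of_mem_neg p (T := Abar) (sum_apply_neg_of_odd A hA_odd) Data Φ
    hx (fun j => hW_symm j _ (hx j)) hz hnz

/-- Lower estimate for the error of optimal recovery of an odd operator matrix
(Proposition 1 of the paper). -/
theorem optimal_recovery_lower_estimate_general
    {m l : ℕ}
    (X : Fin m → Type*) [∀ j, AddCommGroup (X j)] [∀ j, Module ℝ (X j)]
    (Y : Fin l → Type*) [∀ i, NormedAddCommGroup (Y i)] [∀ i, NormedSpace ℝ (Y i)]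
    (Z : Fin m → Type*) [∀ j, AddCommGroup (Z j)] [∀ j, Module ℝ (Z j)]
    (ψ : (Fin l → ℝ) → ℝ)
    (hψ_nonneg : ∀ v, 0 ≤ ψ v)
    (hψ_eq_zero : ∀ v, ψ v = 0 ↔ v = 0)
    (hψ_add : ∀ v w, ψ (v + w) ≤ ψ v + ψ w)
    (hψ_smul : ∀ (c : ℝ) (v : Fin l → ℝ), ψ (c • v) = |c| * ψ v)
    (hψ_mono : ∀ v w : Fin l → ℝ, (∀ i, 0 ≤ v i) → (∀ i, v i ≤ w i) → ψ v ≤ ψ w)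
    (A : ∀ (i : Fin l) (j : Fin m), X j → Y i)
    (hA_odd : ∀ i j (x : X j), A i j (-x) = -(A i j x))
    (I : ∀ j : Fin m, X j → Z j)
    (W : ∀ j : Fin m, Set (X j))
    (hW_symm : ∀ j, ∀ x ∈ W j, -x ∈ W j)
    (U : ∀ j : Fin m, Set (Z j))
    (hU_ne : ∀ j, (U j).Nonempty) :
    -- the operator matrix, the ψ-norm, the class, the available data, and the set W̄(Ū)
    let Abar : (∀ j, X j) → ∀ i, Y i := fun x i => ∑ j, A i j (x j)
    let normψ : (∀ i, Y i) → ℝ := fun y => ψ fun i => ‖y i‖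
    let Wbar : Set (∀ j, X j) := {x | ∀ j, x j ∈ W j}
    let Data : (∀ j, X j) → Set (∀ j, Z j) :=
      fun x => {z | ∀ j, ∃ u ∈ U j, z j = I j (x j) + u}
    let WU : Set (∀ j, X j) := {x | x ∈ Wbar ∧ (Data x ∩ Data (-x)).Nonempty}
    WU.Nonempty →
      (⨆ x ∈ WU, ENNReal.ofReal (normψ (Abar x))) ≤
        ⨅ Φ : (∀ j, Z j) → ∀ i, Y i,
          ⨆ x ∈ Wbar, ⨆ z ∈ Data x, ENNReal.ofReal (normψ (Abar x - Φ z)) :=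
  optimal_recovery_lower_estimate_general_general X Y Z ψ hψ_add hψ_smul hψ_mono A hA_odd I W
    hW_symm U
end

section
/- Optimal recovery of the identity operator on a normed lattice: Let X be a normed lattice, Z a real vector space, W ⊆ X a centrally symmetric class, I : X → Z an odd information map, and U ⊆ Z a nonempty centrally symmetric set. Suppose there exist a map L : Z → X and an element φ ∈ W with Iφ ∈ U such that for all x ∈ W and z ∈ Z, z ∈ Ix + U implies −φ ≤ x − Lz ≤ φ. Then L is an optimal method of recovery of the identity operator id_X on the class W based on information I with U-error, and E(id_X; W; I; U) = E(id_X; W; I; U; L) = ‖φ‖_X. -/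
open scoped ENNReal

/-!
The bound `-φ ≤ x - L z ≤ φ` gives `|x - L z| ≤ |φ|`, so the solid norm bounds the error of `L`
by `‖φ‖`. Conversely, the information `z = 0` is consistent with both `φ` and `-φ`, so any method
errs by at least `max ‖φ - Φ 0‖ ‖-φ - Φ 0‖ ≥ ‖φ‖` on one of them.
-/

/-- The worst-case error `E(A; W; I; U; Φ)` of the recovery method `Φ`. -/
noncomputable def recoveryError {X Y Z : Type*} [Add Z] [Norm Y] [Sub Y]
    (A : X → Y) (W : Set X) (I : X → Z) (U : Set Z) (Φ : Z → Y) : ℝ≥0∞ :=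
  ⨆ x ∈ W, ⨆ z : Z, ⨆ (_ : ∃ u ∈ U, z = I x + u), ENNReal.ofReal ‖A x - Φ z‖

section RecoveryError

variable {X Y Z : Type*} [Add Z] [Norm Y] [Sub Y]
  {A : X → Y} {W : Set X} {I : X → Z} {U : Set Z} {Φ : Z → Y}

theorem ofReal_norm_le_recoveryError {x : X} (hx : x ∈ W) {z : Z} (hz : ∃ u ∈ U, z = I x + u) :
    ENNReal.ofReal ‖A x - Φ z‖ ≤ recoveryError A W I U Φ :=
  le_iSup₂_of_le x hx <| le_iSup_of_le z <| le_iSup_of_le hz le_rfl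

theorem recoveryError_le_ofReal {r : ℝ}
    (h : ∀ x ∈ W, ∀ z : Z, (∃ u ∈ U, z = I x + u) → ‖A x - Φ z‖ ≤ r) :
    recoveryError A W I U Φ ≤ ENNReal.ofReal r :=
  iSup₂_le fun x hx => iSup_le fun z => iSup_le fun hz =>
    ENNReal.ofReal_le_ofReal (h x hx z hz)

end RecoveryError

theorem norm_le_max_norm_sub_norm_neg_sub {E : Type*} [SeminormedAddCommGroup E] [NormedSpace ℝ E]
    (a c : E) : ‖a‖ ≤ max ‖a - c‖ ‖-a - c‖ := by
  have hsum : 2 * ‖a‖ ≤ ‖a - c‖ + ‖-a - c‖ :=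
    calc 2 * ‖a‖ = ‖(2 : ℝ) • a‖ := by rw [norm_smul, Real.norm_two]
      _ = ‖(a - c) - (-a - c)‖ := by congr 1; module
      _ ≤ ‖a - c‖ + ‖-a - c‖ := norm_sub_le _ _
  linarith [le_max_left ‖a - c‖ ‖-a - c‖, le_max_right ‖a - c‖ ‖-a - c‖]

theorem ofReal_norm_le_recoveryError_of_neg {X Y Z : Type*} [AddGroup X] [AddCommGroup Z]
    [SeminormedAddCommGroup Y] [NormedSpace ℝ Y]
    {A : X → Y} (hA : ∀ x, A (-x) = -A x) {W : Set X} (hW : ∀ x ∈ W, -x ∈ W)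
    {I : X → Z} (hI : ∀ x, I (-x) = -I x) {U : Set Z} (hU : ∀ u ∈ U, -u ∈ U)
    {x : X} (hxW : x ∈ W) (hxU : I x ∈ U) (Φ : Z → Y) :
    ENNReal.ofReal ‖A x‖ ≤ recoveryError A W I U Φ := by
  have hpos : ENNReal.ofReal ‖A x - Φ 0‖ ≤ recoveryError A W I U Φ :=
    ofReal_norm_le_recoveryError hxW ⟨-I x, hU _ hxU, by abel⟩
  have hneg : ENNReal.ofReal ‖A (-x) - Φ 0‖ ≤ recoveryError A W I U Φ :=
    ofReal_norm_le_recoveryError (hW x hxW) ⟨I x, hxU, by rw [hI]; abel⟩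
  rw [hA] at hneg
  calc ENNReal.ofReal ‖A x‖ ≤ ENNReal.ofReal (max ‖A x - Φ 0‖ ‖-A x - Φ 0‖) :=
        ENNReal.ofReal_le_ofReal (norm_le_max_norm_sub_norm_neg_sub _ _)
    _ ≤ recoveryError A W I U Φ := by rw [ENNReal.ofReal_max]; exact max_le hpos hneg

theorem norm_le_norm_of_neg_le_of_le {α : Type*} [NormedAddCommGroup α] [Lattice α]
    [HasSolidNorm α] [IsOrderedAddMonoid α] {a b : α} (h₁ : -b ≤ a) (h₂ : a ≤ b) : ‖a‖ ≤ ‖b‖ :=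
  norm_le_norm_of_abs_le_abs (abs_le_abs h₂ (neg_le.mpr h₁))

theorem optimal_recovery_identity_general
    {X Z : Type*} [NormedAddCommGroup X] [Lattice X] [HasSolidNorm X] [IsOrderedAddMonoid X] [NormedSpace ℝ X]
    [AddCommGroup Z] [Module ℝ Z]
    (W : Set X) (hW_symm : ∀ x ∈ W, -x ∈ W)
    (I : X → Z) (hI_odd : ∀ x : X, I (-x) = -(I x))
    (U : Set Z) (hU_symm : ∀ u ∈ U, -u ∈ U)
    (L : Z → X) (φ : X) (hφW : φ ∈ W) (hφU : I φ ∈ U)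
    (hL : ∀ x ∈ W, ∀ z : Z, (∃ u ∈ U, z = I x + u) → -φ ≤ x - L z ∧ x - L z ≤ φ) :
    let Err : (Z → X) → ℝ≥0∞ := fun Φ =>
      ⨆ x ∈ W, ⨆ z : Z, ⨆ (_ : ∃ u ∈ U, z = I x + u), ENNReal.ofReal ‖x - Φ z‖
    (⨅ Φ : Z → X, Err Φ) = Err L ∧ Err L = ENNReal.ofReal ‖φ‖ := by
  show (⨅ Φ, recoveryError id W I U Φ) = recoveryError id W I U L ∧
    recoveryError id W I U L = ENNReal.ofReal ‖φ‖
  have hlower (Φ : Z → X) : ENNReal.ofReal ‖φ‖ ≤ recoveryError id W I U Φ :=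
    ofReal_norm_le_recoveryError_of_neg (A := id) (fun _ => rfl) hW_symm hI_odd hU_symm hφW hφU Φ
  have hL_err : recoveryError id W I U L = ENNReal.ofReal ‖φ‖ :=
    le_antisymm (recoveryError_le_ofReal fun x hx z hz =>
      norm_le_norm_of_neg_le_of_le (hL x hx z hz).1 (hL x hx z hz).2) (hlower L)
  exact ⟨le_antisymm (iInf_le _ L) (le_iInf fun Φ => hL_err ▸ hlower Φ), hL_err⟩

/-- Optimal recovery of the identity operator on a normed lattice
(Proposition 3 of the paper). -/
theorem optimal_recovery_identity
    {X Z : Type*} [NormedAddCommGroup X] [Lattice X] [HasSolidNorm X] [IsOrderedAddMonoid X] [NormedSpace ℝ X]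
    [AddCommGroup Z] [Module ℝ Z]
    (W : Set X) (hW_symm : ∀ x ∈ W, -x ∈ W)
    (I : X → Z) (hI_odd : ∀ x : X, I (-x) = -(I x))
    (U : Set Z) (hU_ne : U.Nonempty) (hU_symm : ∀ u ∈ U, -u ∈ U)
    (L : Z → X) (φ : X) (hφW : φ ∈ W) (hφU : I φ ∈ U)
    (hL : ∀ x ∈ W, ∀ z : Z, (∃ u ∈ U, z = I x + u) → -φ ≤ x - L z ∧ x - L z ≤ φ) :
    let Err : (Z → X) → ℝ≥0∞ := fun Φ =>
      ⨆ x ∈ W, ⨆ z : Z, ⨆ (_ : ∃ u ∈ U, z = I x + u), ENNReal.ofReal ‖x - Φ z‖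
    (⨅ Φ : Z → X, Err Φ) = Err L ∧ Err L = ENNReal.ofReal ‖φ‖ :=
  optimal_recovery_identity_general W hW_symm I hI_odd U hU_symm L φ hφW hφU hL
end

section
/- Optimal recovery of a positive integral operator into L¹ on the class H^ω (Theorem on integral operators, L¹ case): Let (M',ρ) be a compact metric space equipped with a finite Borel measure μ, (N,ν) a σ-finite measure space, and K : N × M' → ℝ a nonnegative ν×μ-integrable kernel. Let A be the integral operator A x(y) := ∫_{M'} K(y,t) x(t) dμ(t), mapping bounded Borel functions on M' into L¹(N,ν). Let W := H^ω(M'), I_Q the evaluation information operator, and U_e the error set. Then the method Φ := A ∘ L_{ω,Q,e} is an optimal method of recovery of A on W based on information I_Q with U_e-error, and E(A; W; I_Q; U_e) = E(A; W; I_Q; U_e; Φ) = ∫_{M'} τ_{ω,Q,e}(t) ( ∫_N K(y,t) dν(y) ) dμ(t). -/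
open MeasureTheory
open scoped ENNReal

/-- The function `τ_{ω,Q,e}(t) = min_j (e_j + ω(ρ(t,q_j)))`. -/
noncomputable def tauOR {M : Type*} [MetricSpace M] (ω : ℝ → ℝ) {n : ℕ}
    (q : Fin n → M) (e : Fin n → ℝ) (t : M) : ℝ :=
  ⨅ j, (e j + ω (dist t (q j)))

/-- The method of recovery `L_{ω,Q,e}` built on the generalized Voronoi cells:
`L_{ω,Q,e} z` equals `z_j` on the cell `Π_j`. -/
noncomputable def LmethOR {M : Type*} [MetricSpace M] (ω : ℝ → ℝ) {n : ℕ}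
    (q : Fin n → M) (e : Fin n → ℝ) (z : Fin n → ℝ) (t : M) : ℝ :=
  haveI := Classical.dec
  if h : (Finset.univ.filter fun j => tauOR ω q e t = e j + ω (dist t (q j))).Nonempty
  then z ((Finset.univ.filter fun j => tauOR ω q e t = e j + ω (dist t (q j))).min' h)
  else 0
/-!
For `x ∈ H^ω` and data `z` within the tolerances `e`, on the cell `Π_j` one has
`|x t - z_j| ≤ |x t - x q_j| + |x q_j - z_j| ≤ ω(ρ(t, q_j)) + e_j = τ(t)`; since `K ≥ 0` this gives
`‖A x - A (L z)‖₁ ≤ ‖A τ‖₁`, and Tonelli turns `‖A τ‖₁` into `∫ τ(t) ∫ K(y, t) dν dμ`.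
Conversely `τ ∈ H^ω` and `0 ≤ τ(q_j) ≤ e_j`, so `τ` and `-τ` are both compatible with the data
`z = 0`: whatever a method returns on `0` is at `L¹`-distance at least `‖A τ‖₁` from `A τ` or
from `A (-τ) = -A τ`.
-/

open Set Filter Topology

section ModulusOfContinuity

variable {M : Type*} [MetricSpace M] {ω : ℝ → ℝ}

theorem continuous_of_abs_sub_le (hω0 : ω 0 = 0) (hω : ContinuousWithinAt ω (Ici 0) 0)
    {x : M → ℝ} (hx : ∀ t t', |x t - x t'| ≤ ω (dist t t')) : Continuous x := by
  refine continuous_iff_continuousAt.2 fun t => tendsto_iff_dist_tendsto_zero.2 ?_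
  have hdist : Tendsto (fun t' => dist t' t) (𝓝 t) (𝓝[Ici 0] 0) :=
    tendsto_nhdsWithin_iff.2
      ⟨tendsto_iff_dist_tendsto_zero.1 tendsto_id, .of_forall fun _ => dist_nonneg⟩
  refine squeeze_zero (fun _ => dist_nonneg) (fun t' => (hx t' t).trans_eq' (Real.dist_eq _ _)) ?_
  exact hω0 ▸ hω.tendsto.comp hdist

theorem exists_abs_le_of_abs_sub_le [CompactSpace M] (hω0 : ω 0 = 0)
    (hω : ContinuousWithinAt ω (Ici 0) 0) {x : M → ℝ}
    (hx : ∀ t t', |x t - x t'| ≤ ω (dist t t')) : ∃ B, ∀ t, |x t| ≤ B :=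
  let ⟨B, hB⟩ := isCompact_univ.exists_bound_of_continuousOn
    (continuous_of_abs_sub_le hω0 hω hx).continuousOn
  ⟨B, fun t => hB t (mem_univ t)⟩

variable [MeasurableSpace M]

/-- The class `H^ω(M)`. -/
def modulusClass (ω : ℝ → ℝ) : Set (M → ℝ) :=
  {x | Measurable x ∧ ∀ t t', |x t - x t'| ≤ ω (dist t t')}

theorem neg_mem_modulusClass {x : M → ℝ} (hx : x ∈ modulusClass ω) : -x ∈ modulusClass ω :=
  ⟨hx.1.neg, fun t t' => by simpa only [Pi.neg_apply, neg_sub_neg, abs_sub_comm] using hx.2 t t'⟩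

end ModulusOfContinuity

section Tau

variable {M : Type*} [MetricSpace M] {ω : ℝ → ℝ} {n : ℕ} {q : Fin n → M} {e : Fin n → ℝ}

theorem tauOR_nonneg (he : ∀ j, 0 ≤ e j) (hω : ∀ s, 0 ≤ s → 0 ≤ ω s) (t : M) :
    0 ≤ tauOR ω q e t :=
  Real.iInf_nonneg fun j => add_nonneg (he j) (hω _ dist_nonneg)

theorem tauOR_le (t : M) (j : Fin n) : tauOR ω q e t ≤ e j + ω (dist t (q j)) :=
  ciInf_le (Finite.bddBelow_range _) j

theorem abs_tauOR_apply_le (he : ∀ j, 0 ≤ e j) (hω0 : ω 0 = 0) (hω : ∀ s, 0 ≤ s → 0 ≤ ω s)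
    (j : Fin n) : |tauOR ω q e (q j)| ≤ e j := by
  rw [abs_of_nonneg (tauOR_nonneg he hω _)]
  simpa only [dist_self, hω0, add_zero] using tauOR_le (ω := ω) (q := q) (e := e) (q j) j

variable [NeZero n]

theorem exists_tauOR_eq (t : M) : ∃ j, tauOR ω q e t = e j + ω (dist t (q j)) :=
  (exists_eq_ciInf_of_finite (f := fun j => e j + ω (dist t (q j)))).imp fun _ h => h.symm

theorem tauOR_le_add (hω_mono : MonotoneOn ω (Ici 0))
    (hω_subadd : ∀ s t : ℝ, 0 ≤ s → 0 ≤ t → ω (s + t) ≤ ω s + ω t) (t t' : M) :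
    tauOR ω q e t ≤ tauOR ω q e t' + ω (dist t t') := by
  rw [← sub_le_iff_le_add]
  refine le_ciInf fun j => sub_le_iff_le_add.2 ?_
  calc tauOR ω q e t ≤ e j + ω (dist t (q j)) := tauOR_le t j
    _ ≤ e j + ω (dist t t' + dist t' (q j)) := by
      gcongr
      exact hω_mono dist_nonneg (add_nonneg dist_nonneg dist_nonneg) (dist_triangle _ _ _)
    _ ≤ e j + ω (dist t' (q j)) + ω (dist t t') := by
      linarith [hω_subadd _ _ (dist_nonneg (x := t) (y := t')) (dist_nonneg (x := t') (y := q j))]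

theorem abs_tauOR_sub_le (hω_mono : MonotoneOn ω (Ici 0))
    (hω_subadd : ∀ s t : ℝ, 0 ≤ s → 0 ≤ t → ω (s + t) ≤ ω s + ω t) (t t' : M) :
    |tauOR ω q e t - tauOR ω q e t'| ≤ ω (dist t t') := by
  have h₁ := tauOR_le_add (q := q) (e := e) hω_mono hω_subadd t t'
  have h₂ := tauOR_le_add (q := q) (e := e) hω_mono hω_subadd t' t
  rw [dist_comm] at h₂
  exact abs_sub_le_iff.2 ⟨by linarith, by linarith⟩

theorem continuous_tauOR (hω0 : ω 0 = 0) (hω_cont : ContinuousWithinAt ω (Ici 0) 0)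
    (hω_mono : MonotoneOn ω (Ici 0))
    (hω_subadd : ∀ s t : ℝ, 0 ≤ s → 0 ≤ t → ω (s + t) ≤ ω s + ω t) :
    Continuous (tauOR ω q e) :=
  continuous_of_abs_sub_le hω0 hω_cont (abs_tauOR_sub_le hω_mono hω_subadd)

theorem tauOR_mem_modulusClass [MeasurableSpace M] [OpensMeasurableSpace M] (hω0 : ω 0 = 0)
    (hω_cont : ContinuousWithinAt ω (Ici 0) 0) (hω_mono : MonotoneOn ω (Ici 0))
    (hω_subadd : ∀ s t : ℝ, 0 ≤ s → 0 ≤ t → ω (s + t) ≤ ω s + ω t) :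
    tauOR ω q e ∈ modulusClass ω :=
  ⟨(continuous_tauOR hω0 hω_cont hω_mono hω_subadd).measurable,
    abs_tauOR_sub_le hω_mono hω_subadd⟩

end Tau

section VoronoiIndex

variable {M : Type*} [MetricSpace M] {ω : ℝ → ℝ} {n : ℕ} [NeZero n] {q : Fin n → M}
  {e : Fin n → ℝ}

variable (ω q e) in
/-- `voronoiIndex ω q e t = j` iff `t ∈ Π_j`. -/
noncomputable def voronoiIndex (t : M) : Fin n :=
  haveI := Classical.dec
  (Finset.univ.filter fun j => tauOR ω q e t = e j + ω (dist t (q j))).min'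
    ((exists_tauOR_eq t).elim fun j hj => ⟨j, Finset.mem_filter.2 ⟨Finset.mem_univ j, hj⟩⟩)

theorem voronoiIndex_eq_iff (t : M) (j : Fin n) :
    voronoiIndex ω q e t = j ↔ tauOR ω q e t = e j + ω (dist t (q j)) ∧
      ∀ i, tauOR ω q e t = e i + ω (dist t (q i)) → j ≤ i := by
  simp only [voronoiIndex, Finset.min'_eq_iff, Finset.mem_filter, Finset.mem_univ, true_and]

theorem tauOR_eq_voronoiIndex (t : M) :
    tauOR ω q e t = e (voronoiIndex ω q e t) + ω (dist t (q (voronoiIndex ω q e t))) :=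
  ((voronoiIndex_eq_iff t _).1 rfl).1

theorem LmethOR_eq_voronoiIndex (z : Fin n → ℝ) (t : M) :
    LmethOR ω q e z t = z (voronoiIndex ω q e t) :=
  dif_pos _

theorem measurable_voronoiIndex [MeasurableSpace M] [OpensMeasurableSpace M] (hω0 : ω 0 = 0)
    (hω_cont : ContinuousOn ω (Ici 0)) (hω_mono : MonotoneOn ω (Ici 0))
    (hω_subadd : ∀ s t : ℝ, 0 ≤ s → 0 ≤ t → ω (s + t) ≤ ω s + ω t) :
    Measurable (voronoiIndex ω q e) := by
  have hτ := continuous_tauOR (q := q) (e := e) hω0 (hω_cont 0 self_mem_Ici) hω_mono hω_subadd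
  have hcell : ∀ j, MeasurableSet {t | tauOR ω q e t = e j + ω (dist t (q j))} := fun j =>
    measurableSet_eq_fun hτ.measurable <| (continuous_const.add <|
      hω_cont.comp_continuous (continuous_id.dist continuous_const) fun _ => dist_nonneg).measurable
  refine measurable_to_countable' fun j => ?_
  have hpre : voronoiIndex ω q e ⁻¹' {j} = {t | tauOR ω q e t = e j + ω (dist t (q j))} ∩
      ⋂ i, ({t | tauOR ω q e t = e i + ω (dist t (q i))}ᶜ ∪ {_t | j ≤ i}) := by
    ext t
    simp only [mem_preimage, mem_singleton_iff, voronoiIndex_eq_iff, mem_inter_iff, mem_iInter,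
      mem_union, mem_compl_iff, mem_ofPred_eq, imp_iff_not_or]
  rw [hpre]
  exact (hcell j).inter (.iInter fun i => (hcell i).compl.union (.const _))

theorem measurable_LmethOR [MeasurableSpace M] [OpensMeasurableSpace M] (hω0 : ω 0 = 0)
    (hω_cont : ContinuousOn ω (Ici 0)) (hω_mono : MonotoneOn ω (Ici 0))
    (hω_subadd : ∀ s t : ℝ, 0 ≤ s → 0 ≤ t → ω (s + t) ≤ ω s + ω t) (z : Fin n → ℝ) :
    Measurable (LmethOR ω q e z) := by
  simp_rw [funext (LmethOR_eq_voronoiIndex z)]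
  exact (measurable_of_countable z).comp (measurable_voronoiIndex hω0 hω_cont hω_mono hω_subadd)

theorem abs_sub_LmethOR_le {x : M → ℝ} (hx : ∀ t t', |x t - x t'| ≤ ω (dist t t'))
    {z : Fin n → ℝ} (hz : ∀ j, |z j - x (q j)| ≤ e j) (t : M) :
    |x t - LmethOR ω q e z t| ≤ tauOR ω q e t := by
  rw [LmethOR_eq_voronoiIndex, tauOR_eq_voronoiIndex]
  set j := voronoiIndex ω q e t
  calc |x t - z j| ≤ |x t - x (q j)| + |x (q j) - z j| := abs_sub_le _ _ _
    _ ≤ e j + ω (dist t (q j)) := by linarith [hx t (q j), abs_sub_comm (z j) (x (q j)), hz j]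

theorem abs_LmethOR_le (z : Fin n → ℝ) (t : M) : |LmethOR ω q e z t| ≤ ∑ j, |z j| := by
  rw [LmethOR_eq_voronoiIndex]
  exact Finset.single_le_sum (fun j _ => abs_nonneg (z j)) (Finset.mem_univ _)

end VoronoiIndex

theorem eLpNorm_le_of_eLpNorm_sub_le_of_eLpNorm_neg_sub_le {α E : Type*} [MeasurableSpace α]
    {μ : Measure α} [NormedAddCommGroup E] [NormedSpace ℝ E] {p c : ℝ≥0∞} {f g : α → E}
    (hf : AEStronglyMeasurable f μ) (hg : AEStronglyMeasurable g μ) (hp : 1 ≤ p)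
    (h₁ : eLpNorm (f - g) p μ ≤ c) (h₂ : eLpNorm (-f - g) p μ ≤ c) : eLpNorm f p μ ≤ c := by
  have hfg : (f - g) - (-f - g) = 2 • f := by rw [two_nsmul]; abel
  refine (ENNReal.mul_le_mul_iff_right two_ne_zero ENNReal.ofNat_ne_top).1 ?_
  calc 2 * eLpNorm f p μ = eLpNorm ((f - g) - (-f - g)) p μ := by
        rw [hfg, eLpNorm_nsmul, Nat.cast_ofNat]
    _ ≤ eLpNorm (f - g) p μ + eLpNorm (-f - g) p μ :=
        eLpNorm_sub_le (hf.sub hg) (hf.neg.sub hg) hp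
    _ ≤ 2 * c := by rw [two_mul]; exact add_le_add h₁ h₂

section IntegralOperator

variable {M N : Type*} [MeasurableSpace M]

noncomputable def integralOperator (K : N → M → ℝ) (μ : Measure M) (x : M → ℝ) (y : N) : ℝ :=
  ∫ t, K y t * x t ∂μ

variable {μ : Measure M} {K : N → M → ℝ} {x x' h : M → ℝ} {B B' B'' : ℝ}

theorem integralOperator_neg : integralOperator K μ (-x) = -integralOperator K μ x := by
  funext y
  simp only [integralOperator, Pi.neg_apply, mul_neg, integral_neg]

variable [MeasurableSpace N] {ν : Measure N}

theorem integrable_kernel_mul (hK : Integrable (fun p : N × M => K p.1 p.2) (ν.prod μ))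
    (hx : AEStronglyMeasurable x μ) (hB : ∀ t, |x t| ≤ B) :
    Integrable (fun p : N × M => K p.1 p.2 * x p.2) (ν.prod μ) :=
  hK.mul_bdd hx.comp_snd (.of_forall fun p => hB p.2)

theorem memLp_integralOperator [SFinite μ] (hK : Integrable (fun p : N × M => K p.1 p.2) (ν.prod μ))
    (hx : AEStronglyMeasurable x μ) (hB : ∀ t, |x t| ≤ B) :
    MemLp (integralOperator K μ x) 1 ν :=
  memLp_one_iff_integrable.2 (integrable_kernel_mul hK hx hB).integral_prod_left

variable [SFinite μ] [SFinite ν]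

theorem eLpNorm_integralOperator_of_nonneg (hK_nonneg : ∀ y t, 0 ≤ K y t)
    (hK : Integrable (fun p : N × M => K p.1 p.2) (ν.prod μ))
    (hh : AEStronglyMeasurable h μ) (hB : ∀ t, |h t| ≤ B) (h_nonneg : ∀ t, 0 ≤ h t) :
    eLpNorm (integralOperator K μ h) 1 ν =
      ∫⁻ t, ENNReal.ofReal (h t) * ∫⁻ y, ENNReal.ofReal (K y t) ∂ν ∂μ := by
  have hKh := integrable_kernel_mul hK hh hB
  have hKh_nonneg : ∀ y t, 0 ≤ K y t * h t := fun y t => mul_nonneg (hK_nonneg y t) (h_nonneg t)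
  calc eLpNorm (integralOperator K μ h) 1 ν
      = ∫⁻ y, ∫⁻ t, ENNReal.ofReal (K y t * h t) ∂μ ∂ν := by
        rw [eLpNorm_one_eq_lintegral_enorm]
        refine lintegral_congr_ae ?_
        filter_upwards [hKh.prod_right_ae] with y hy
        rw [integralOperator, Real.enorm_of_nonneg (integral_nonneg (hKh_nonneg y))]
        exact ofReal_integral_eq_lintegral_ofReal hy (.of_forall (hKh_nonneg y))
    _ = ∫⁻ t, ∫⁻ y, ENNReal.ofReal (h t) * ENNReal.ofReal (K y t) ∂ν ∂μ := by
        rw [lintegral_lintegral_swap (f := fun y t => ENNReal.ofReal (K y t * h t))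
          hKh.aestronglyMeasurable.aemeasurable.ennreal_ofReal]
        simp only [← ENNReal.ofReal_mul (h_nonneg _), mul_comm (h _)]
    _ = ∫⁻ t, ENNReal.ofReal (h t) * ∫⁻ y, ENNReal.ofReal (K y t) ∂ν ∂μ := by
        simp only [lintegral_const_mul' _ _ ENNReal.ofReal_ne_top]

theorem eLpNorm_integralOperator_sub_le (hK_nonneg : ∀ y t, 0 ≤ K y t)
    (hK : Integrable (fun p : N × M => K p.1 p.2) (ν.prod μ))
    (hx : AEStronglyMeasurable x μ) (hBx : ∀ t, |x t| ≤ B)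
    (hx' : AEStronglyMeasurable x' μ) (hBx' : ∀ t, |x' t| ≤ B')
    (hh : AEStronglyMeasurable h μ) (hBh : ∀ t, |h t| ≤ B'') (hxx' : ∀ t, |x t - x' t| ≤ h t) :
    eLpNorm (fun y => integralOperator K μ x y - integralOperator K μ x' y) 1 ν ≤
      eLpNorm (integralOperator K μ h) 1 ν := by
  refine eLpNorm_mono_ae_real ?_
  filter_upwards [(integrable_kernel_mul hK hx hBx).prod_right_ae,
    (integrable_kernel_mul hK hx' hBx').prod_right_ae,
    (integrable_kernel_mul hK hh hBh).prod_right_ae] with y hKx hKx' hKh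
  calc ‖integralOperator K μ x y - integralOperator K μ x' y‖
      = ‖∫ t, K y t * (x t - x' t) ∂μ‖ := by
        simp only [integralOperator, ← integral_sub hKx hKx', mul_sub]
    _ ≤ ∫ t, ‖K y t * (x t - x' t)‖ ∂μ := norm_integral_le_integral_norm _
    _ ≤ integralOperator K μ h y := by
        refine integral_mono_of_nonneg (.of_forall fun _ => norm_nonneg _) hKh
          (.of_forall fun t => ?_)
        dsimp only
        rw [norm_mul, Real.norm_of_nonneg (hK_nonneg y t)]
        exact mul_le_mul_of_nonneg_left (hxx' t) (hK_nonneg y t)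

end IntegralOperator

theorem optimal_recovery_integral_operator_L1_general
    {M : Type*} [MetricSpace M] [CompactSpace M] [MeasurableSpace M] [BorelSpace M]
    (μ : Measure M) [IsFiniteMeasure μ]
    {N : Type*} [MeasurableSpace N] (ν : Measure N) [SigmaFinite ν]
    (K : N → M → ℝ) (hK_nonneg : ∀ y t, 0 ≤ K y t)
    (hK_int : Integrable (fun p : N × M => K p.1 p.2) (ν.prod μ))
    (ω : ℝ → ℝ) (hω0 : ω 0 = 0)
    (hω_cont : ContinuousOn ω (Set.Ici 0))
    (hω_mono : MonotoneOn ω (Set.Ici 0))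
    (hω_subadd : ∀ s t : ℝ, 0 ≤ s → 0 ≤ t → ω (s + t) ≤ ω s + ω t)
    {n : ℕ} (hn : 0 < n) (q : Fin n → M) (e : Fin n → ℝ) (he : ∀ j, 0 ≤ e j) :
    -- the integral operator, the class `H^ω`, the error of a method, and the optimal method
    let A : (M → ℝ) → N → ℝ := fun x y => ∫ t, K y t * x t ∂μ
    let W : Set (M → ℝ) := {x | Measurable x ∧ ∀ t t' : M, |x t - x t'| ≤ ω (dist t t')}
    let Err : ((Fin n → ℝ) → N → ℝ) → ℝ≥0∞ := fun Φ =>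
      ⨆ x ∈ W, ⨆ z : Fin n → ℝ, ⨆ (_ : ∀ j, |z j - x (q j)| ≤ e j),
        eLpNorm (fun y => A x y - Φ z y) 1 ν
    let Φ₀ : (Fin n → ℝ) → N → ℝ := fun z => A (LmethOR ω q e z)
    (⨅ Φ : {Φ : (Fin n → ℝ) → N → ℝ // ∀ z, MemLp (Φ z) 1 ν}, Err Φ.1) = Err Φ₀ ∧
      Err Φ₀ = ∫⁻ t, ENNReal.ofReal (tauOR ω q e t) * (∫⁻ y, ENNReal.ofReal (K y t) ∂ν) ∂μ := by
  intro A W Err Φ₀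
  have : NeZero n := ⟨hn.ne'⟩
  have hω_cont0 : ContinuousWithinAt ω (Ici 0) 0 := hω_cont 0 self_mem_Ici
  have hω_nonneg : ∀ s, 0 ≤ s → 0 ≤ ω s := fun s hs => hω0 ▸ hω_mono self_mem_Ici hs hs
  have hbdd : ∀ x ∈ W, ∃ B, ∀ t, |x t| ≤ B := fun x hx =>
    exists_abs_le_of_abs_sub_le hω0 hω_cont0 hx.2
  set τ := tauOR ω q e
  have hτW : τ ∈ W := tauOR_mem_modulusClass hω0 hω_cont0 hω_mono hω_subadd
  obtain ⟨Bτ, hBτ⟩ := hbdd τ hτW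
  have hL_meas := measurable_LmethOR (q := q) (e := e) hω0 hω_cont hω_mono hω_subadd
  have hΦ₀ : ∀ z, MemLp (Φ₀ z) 1 ν := fun z =>
    memLp_integralOperator hK_int (hL_meas z).aestronglyMeasurable (abs_LmethOR_le z)
  have upper : Err Φ₀ ≤ eLpNorm (integralOperator K μ τ) 1 ν :=
    iSup₂_le fun x hx => iSup₂_le fun z hz =>
      let ⟨Bx, hBx⟩ := hbdd x hx
      eLpNorm_integralOperator_sub_le hK_nonneg hK_int hx.1.aestronglyMeasurable hBx
        (hL_meas z).aestronglyMeasurable (abs_LmethOR_le z) hτW.1.aestronglyMeasurable hBτ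
        (abs_sub_LmethOR_le hx.2 hz)
  have lower : ∀ Φ : (Fin n → ℝ) → N → ℝ, (∀ z, MemLp (Φ z) 1 ν) →
      eLpNorm (integralOperator K μ τ) 1 ν ≤ Err Φ := fun Φ hΦ => by
    have hτ_q := abs_tauOR_apply_le (q := q) he hω0 hω_nonneg
    refine eLpNorm_le_of_eLpNorm_sub_le_of_eLpNorm_neg_sub_le
      (memLp_integralOperator hK_int hτW.1.aestronglyMeasurable hBτ).1 (hΦ 0).1 le_rfl
      (le_iSup₂_of_le τ hτW (le_iSup₂_of_le 0 (by simpa using hτ_q) le_rfl)) ?_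
    rw [← integralOperator_neg]
    exact le_iSup₂_of_le (-τ) (neg_mem_modulusClass hτW)
      (le_iSup₂_of_le 0 (by simpa using hτ_q) le_rfl)
  have hAτ := eLpNorm_integralOperator_of_nonneg hK_nonneg hK_int hτW.1.aestronglyMeasurable hBτ
    (tauOR_nonneg he hω_nonneg)
  exact ⟨le_antisymm (iInf_le_of_le ⟨Φ₀, hΦ₀⟩ le_rfl)
    (le_iInf fun Φ => upper.trans (lower Φ.1 Φ.2)), hAτ ▸ le_antisymm upper (lower Φ₀ hΦ₀)⟩

/-- Optimal recovery of a positive integral operator into `L¹` on the class `H^ω`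
(Theorem 2 of the paper, `L¹` case). -/
theorem optimal_recovery_integral_operator_L1
    {M : Type*} [MetricSpace M] [CompactSpace M] [MeasurableSpace M] [BorelSpace M]
    (μ : Measure M) [IsFiniteMeasure μ]
    {N : Type*} [MeasurableSpace N] (ν : Measure N) [SigmaFinite ν]
    (K : N → M → ℝ) (hK_nonneg : ∀ y t, 0 ≤ K y t)
    (hK_int : Integrable (fun p : N × M => K p.1 p.2) (ν.prod μ))
    (ω : ℝ → ℝ) (hω0 : ω 0 = 0)
    (hω_cont : ContinuousOn ω (Set.Ici 0))
    (hω_mono : MonotoneOn ω (Set.Ici 0))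
    (hω_subadd : ∀ s t : ℝ, 0 ≤ s → 0 ≤ t → ω (s + t) ≤ ω s + ω t)
    (hω_nonneg : ∀ s : ℝ, 0 ≤ s → 0 ≤ ω s)
    {n : ℕ} (hn : 0 < n) (q : Fin n → M) (e : Fin n → ℝ) (he : ∀ j, 0 ≤ e j) :
    -- the integral operator, the class `H^ω`, the error of a method, and the optimal method
    let A : (M → ℝ) → N → ℝ := fun x y => ∫ t, K y t * x t ∂μ
    let W : Set (M → ℝ) := {x | Measurable x ∧ ∀ t t' : M, |x t - x t'| ≤ ω (dist t t')}
    let Err : ((Fin n → ℝ) → N → ℝ) → ℝ≥0∞ := fun Φ =>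
      ⨆ x ∈ W, ⨆ z : Fin n → ℝ, ⨆ (_ : ∀ j, |z j - x (q j)| ≤ e j),
        eLpNorm (fun y => A x y - Φ z y) 1 ν
    let Φ₀ : (Fin n → ℝ) → N → ℝ := fun z => A (LmethOR ω q e z)
    (⨅ Φ : {Φ : (Fin n → ℝ) → N → ℝ // ∀ z, MemLp (Φ z) 1 ν}, Err Φ.1) = Err Φ₀ ∧
      Err Φ₀ = ∫⁻ t, ENNReal.ofReal (tauOR ω q e t) * (∫⁻ y, ENNReal.ofReal (K y t) ∂ν) ∂μ :=
  optimal_recovery_integral_operator_L1_general μ ν K hK_nonneg hK_int ω hω0 hω_cont hω_mono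
    hω_subadd hn q e he
end
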